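/- arXiv:math/9712266 — 5 statements merged into one kernel-verified Lean document; each statement's English description precedes it below -/
import Mathlib

section
/- In the Young–Fibonacci lattice, every Fibonacci word has exactly one more successor than predecessors. -/
/-- A Fibonacci word: a finite word in the alphabet `{1,2}`. -/
def IsFibWord (v : List ℕ) : Prop := ∀ x ∈ v, x = 1 ∨ x = 2

/-- The length of the head of a word: the maximal initial run of `2`'s. -/
def headLen : List ℕ → ℕ
  | 2 :: t => headLen t + 1
  | _ => 0

/-- The set of successors of a Fibonacci word `v` in the Young-Fibonacci order:
(i) prepend a `1`; (ii) replace the leftmost `1` by a `2`; (iii) insert a `1`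
between two `2`'s of the head, or immediately after the last `2` of the head. -/
def succs (v : List ℕ) : Set (List ℕ) :=
  {w | w = 1 :: v} ∪
  {w | ∃ u, v = List.replicate (headLen v) 2 ++ 1 :: u ∧
        w = List.replicate (headLen v + 1) 2 ++ u} ∪
  {w | ∃ j, 1 ≤ j ∧ j ≤ headLen v ∧
        w = List.replicate j 2 ++ 1 ::
              (List.replicate (headLen v - j) 2 ++ v.drop (headLen v))}

/-- The set of predecessors of a Fibonacci word `v` in the Young-Fibonacci order:
(i) delete the leftmost `1`; (ii) replace one of the `2`'s of the head by a `1`. -/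
def preds (v : List ℕ) : Set (List ℕ) :=
  {u | ∃ u', v = List.replicate (headLen v) 2 ++ 1 :: u' ∧
        u = List.replicate (headLen v) 2 ++ u'} ∪
  {u | ∃ j, j < headLen v ∧
        u = List.replicate j 2 ++ 1 ::
              (List.replicate (headLen v - 1 - j) 2 ++ v.drop (headLen v))}

open List Set

/-
Write `v = 2ʰ w` with `h = headLen v`. Inserting a `1` into the head gives `h` successors and
replacing a `2` of the head by a `1` gives `h` predecessors; if `w` begins with `1`, replacing
that `1` by a `2` and deleting it add one successor and one predecessor; finally prepending a `1`
adds one more successor. The length of the head tells all these words apart: `1 :: v` has head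
length `0`, the insertions `1, …, h`, the replacement of `w`'s leading `1` more than `h`, the head
replacements less than `h`, the deletion at least `h`.
-/

lemma headLen_replicate_append (k : ℕ) (t : List ℕ) :
    headLen (replicate k 2 ++ t) = k + headLen t := by
  induction k with
  | zero => simp
  | succ k ih => simp only [replicate_succ, cons_append, headLen, ih]; omega

lemma headLen_replicate_append_one (k : ℕ) (t : List ℕ) :
    headLen (replicate k 2 ++ 1 :: t) = k := by
  simp [headLen_replicate_append, headLen]

lemma ncard_image_replicate_append_one (s : Set ℕ) (t : ℕ → List ℕ) :
    ((fun j => replicate j 2 ++ 1 :: t j) '' s).ncard = s.ncard :=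
  ncard_image_of_injective s <| Function.LeftInverse.injective (g := headLen)
    fun j => headLen_replicate_append_one j (t j)

lemma ncard_union_eq_of_separating {α β : Type*} [Preorder β] {A B : Set α} (f : α → β)
    (a : β) (hA : A.Finite) (hB : B.Finite) (hAa : ∀ w ∈ A, f w < a)
    (hBa : ∀ w ∈ B, a ≤ f w) :
    (A ∪ B).ncard = A.ncard + B.ncard :=
  ncard_union_eq (disjoint_left.2 fun w hwA hwB => (hBa w hwB).not_gt (hAa w hwA)) hA hB

/-- Nonempty exactly when the leftmost `1` of `v` directly follows its head, and then it consists
of the part of `v` after that `1`. -/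
def tailAfterHeadOne (v : List ℕ) : Set (List ℕ) :=
  {u | v = replicate (headLen v) 2 ++ 1 :: u}

lemma tailAfterHeadOne_subsingleton (v : List ℕ) : (tailAfterHeadOne v).Subsingleton :=
  fun _ hu _ hu' => by simpa using hu.symm.trans hu'

lemma succs_eq (v : List ℕ) :
    succs v = {1 :: v} ∪
      (fun j => replicate j 2 ++ 1 :: (replicate (headLen v - j) 2 ++ v.drop (headLen v))) ''
        Icc 1 (headLen v) ∪
      (replicate (headLen v + 1) 2 ++ ·) '' tailAfterHeadOne v := by
  ext w
  simp only [succs, tailAfterHeadOne, mem_union, mem_singleton_iff, mem_image, mem_Icc,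
    mem_ofPred_eq]
  grind

lemma preds_eq (v : List ℕ) :
    preds v =
      (fun j => replicate j 2 ++ 1 :: (replicate (headLen v - 1 - j) 2 ++ v.drop (headLen v))) ''
        Iio (headLen v) ∪
      (replicate (headLen v) 2 ++ ·) '' tailAfterHeadOne v := by
  ext w
  simp only [preds, tailAfterHeadOne, mem_union, mem_image, mem_Iio, mem_ofPred_eq]
  grind

theorem stmt_5_general (v : List ℕ) :
    (succs v).ncard = (preds v).ncard + 1 := by
  have := (tailAfterHeadOne_subsingleton v).finite.to_subtype
  have hIcc : (Icc 1 (headLen v)).ncard = headLen v := by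
    rw [← Finset.coe_Icc, ncard_coe_finset, Nat.card_Icc]; omega
  have hIio : (Iio (headLen v)).ncard = headLen v := by
    rw [← Finset.coe_Iio, ncard_coe_finset, Nat.card_Iio]
  rw [succs_eq, preds_eq,
    ncard_union_eq_of_separating headLen (headLen v + 1) (toFinite _) (toFinite _)
      ?headSuccs ?replaceOne,
    ncard_union_eq_of_separating headLen 1 (toFinite _) (toFinite _) ?prepend ?insert,
    ncard_union_eq_of_separating headLen (headLen v) (toFinite _) (toFinite _)
      ?replaceTwo ?delete,
    ncard_singleton, ncard_image_replicate_append_one, ncard_image_replicate_append_one,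
    ncard_image_of_injective _ (append_right_injective _),
    ncard_image_of_injective _ (append_right_injective _), hIcc, hIio]
  · omega
  case headSuccs =>
    rintro _ (rfl | ⟨j, hj, rfl⟩)
    · simp [headLen]
    · simpa [headLen_replicate_append_one, Nat.lt_succ_iff] using hj.2
  case replaceOne | delete =>
    rintro _ ⟨u, -, rfl⟩
    simp [headLen_replicate_append]
  case prepend =>
    rintro _ rfl
    simp [headLen]
  case insert =>
    rintro _ ⟨j, hj, rfl⟩
    simpa [headLen_replicate_append_one] using hj.1
  case replaceTwo =>
    rintro _ ⟨j, hj, rfl⟩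
    simpa [headLen_replicate_append_one] using hj

/-- In the Young-Fibonacci lattice, every Fibonacci word has exactly one more
successor than predecessors. -/
theorem stmt_5 (v : List ℕ) (hv : IsFibWord v) :
    (succs v).ncard = (preds v).ncard + 1 :=
  stmt_5_general v
end

section
/- Let Γ be a branching diagram (graded graph with unique minimal element ∅ and finite levels) and let t = (v_0, v_1, …) be an infinite path in Γ such that d(∅, t) := lim_n d(∅, v_n) is finite, where d(u,w) is the number of saturated chains from u to w. Then the function φ_t(v) = d(v,t)/d(∅,t), with d(v,t) := lim_n d(v, v_n), is a non-negative harmonic function on Γ with φ_t(∅) = 1, i.e., φ_t(u) = Σ_{w : u ⋖ w} φ_t(w) for every vertex u. -/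
/-!
Appending the step `t n ⋖ t (n + 1)` to chains shows that `n ↦ d(v, t n)` is nondecreasing, and
prepending a chain from `∅` to `v` bounds it by `d(∅, t n)`; so it is eventually constant, with
value `L v`. Splitting a chain at its first step gives `d(u, w) = ∑_{u ⋖ v} d(v, w)` whenever
`rank u < rank w`; since the rank grows along the path, this identity passes to the eventual
values, which makes `L` harmonic. Finally `L ∅ ≥ 1` because every vertex is reachable
from `∅`.
-/

/-- A branching diagram: a graded graph with finite levels, a unique minimal
vertex `bot` of rank `0`, no maximal vertices, and every vertex of positive
rank covering some vertex. `covers u w` means `w` covers `u` (`u ⋖ w`). -/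
structure BranchingDiagram where
  V : Type
  rank : V → ℕ
  covers : V → V → Prop
  rank_covers : ∀ u w, covers u w → rank w = rank u + 1
  finite_level : ∀ n : ℕ, {v : V | rank v = n}.Finite
  bot : V
  rank_bot : rank bot = 0
  bot_unique : ∀ v, rank v = 0 → v = bot
  no_max : ∀ v, ∃ w, covers v w
  exists_pred : ∀ v, rank v ≠ 0 → ∃ u, covers u v

/-- `Γ.d u w` is the number of saturated chains (paths along covering relations)
from `u` to `w`. -/
noncomputable def BranchingDiagram.d (Γ : BranchingDiagram) (u w : Γ.V) : ℕ :=
  Set.ncard {p : List Γ.V | p.Chain' Γ.covers ∧ p.head? = some u ∧ p.getLast? = some w}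

/-- A `1`-differential poset: (D1) for distinct vertices of equal rank, the number
of common lower covers equals the number of common upper covers; (D2) each vertex
is covered by one more vertex than it covers. -/
def BranchingDiagram.IsDifferential (Γ : BranchingDiagram) : Prop :=
  (∀ u v : Γ.V, u ≠ v → Γ.rank u = Γ.rank v →
      Set.ncard {x | Γ.covers x u ∧ Γ.covers x v} =
        Set.ncard {w | Γ.covers u w ∧ Γ.covers v w}) ∧
  (∀ v : Γ.V, Set.ncard {w | Γ.covers v w} = Set.ncard {u | Γ.covers u v} + 1)

open Filter

theorem Nat.eventually_eq_iSup_of_monotone {f : ℕ → ℕ} (hf : Monotone f)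
    (hbdd : BddAbove (Set.range f)) : ∀ᶠ n in atTop, f n = ⨆ n, f n := by
  have h := tendsto_atTop_ciSup hf hbdd
  rwa [nhds_discrete, tendsto_pure] at h

namespace BranchingDiagram

variable {Γ : BranchingDiagram} {u v w a b : Γ.V} {p q l : List Γ.V}

variable (Γ) in
def chains (u w : Γ.V) : Set (List Γ.V) :=
  {p | p.IsChain Γ.covers ∧ p.head? = some u ∧ p.getLast? = some w}

variable (Γ) in
theorem d_eq_ncard_chains (u w : Γ.V) : Γ.d u w = (Γ.chains u w).ncard := rfl

@[simp]
theorem nil_notMem_chains : [] ∉ Γ.chains u w := by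
  simp [chains]

@[simp]
theorem singleton_mem_chains : [a] ∈ Γ.chains u w ↔ u = a ∧ a = w := by
  simp [chains, eq_comm]

@[simp]
theorem cons_cons_mem_chains :
    a :: b :: l ∈ Γ.chains u w ↔ u = a ∧ Γ.covers a b ∧ b :: l ∈ Γ.chains b w := by
  simp [chains, List.getLast?_cons_cons, and_assoc, and_left_comm, eq_comm]

theorem cons_mem_chains (h : Γ.covers u v) (hq : q ∈ Γ.chains v w) :
    u :: q ∈ Γ.chains u w := by
  match q with
  | [] => simp at hq
  | b :: l =>
    obtain rfl : b = v := by simpa using hq.2.1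
    simpa [h] using hq

theorem concat_mem_chains (hq : q ∈ Γ.chains u v) (h : Γ.covers v w) :
    q ++ [w] ∈ Γ.chains u w := by
  induction q generalizing u with
  | nil => simp at hq
  | cons a l ih =>
    match l with
    | [] => simp_all
    | b :: l => simp_all

theorem rank_add_length_of_mem_chains (hp : p ∈ Γ.chains u w) :
    Γ.rank u + p.length = Γ.rank w + 1 := by
  induction p generalizing u with
  | nil => simp at hp
  | cons a l ih =>
    match l with
    | [] => simp_all
    | b :: l =>
      obtain ⟨rfl, hab, hl⟩ := cons_cons_mem_chains.1 hp
      have := ih hl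
      have := Γ.rank_covers u b hab
      simp only [List.length_cons] at *
      omega

theorem chains_subset_singleton (h : Γ.rank w ≤ Γ.rank u) : Γ.chains u w ⊆ {[u]} := by
  intro p hp
  have hlen := rank_add_length_of_mem_chains hp
  match p with
  | [] => simp at hp
  | [a] => simp_all
  | _ :: _ :: _ => simp at hlen; omega

theorem chains_eq_biUnion (h : Γ.rank u < Γ.rank w) :
    Γ.chains u w = ⋃ v ∈ {v | Γ.covers u v}, List.cons u '' Γ.chains v w := by
  ext p
  simp only [Set.mem_iUnion, Set.mem_image, Set.mem_ofPred_eq, exists_prop]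
  constructor
  · intro hp
    have hlen := rank_add_length_of_mem_chains hp
    match p with
    | [] => simp at hp
    | [a] => simp_all
    | a :: b :: l =>
      obtain ⟨rfl, hab, hl⟩ := cons_cons_mem_chains.1 hp
      exact ⟨b, hab, b :: l, hl, rfl⟩
  · rintro ⟨v, huv, q, hq, rfl⟩
    exact cons_mem_chains huv hq

variable (Γ) in
theorem finite_covers (u : Γ.V) : {v | Γ.covers u v}.Finite :=
  (Γ.finite_level (Γ.rank u + 1)).subset fun v hv => Γ.rank_covers u v hv

variable (Γ) in
theorem finite_chains (u w : Γ.V) : (Γ.chains u w).Finite := by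
  induction hk : Γ.rank w - Γ.rank u generalizing u with
  | zero => exact (Set.finite_singleton _).subset (chains_subset_singleton (by omega))
  | succ k ih =>
    rw [chains_eq_biUnion (by omega)]
    refine (Γ.finite_covers u).biUnion fun v hv => (ih v ?_).image _
    have := Γ.rank_covers u v hv
    omega

theorem d_eq_finsum_covers (h : Γ.rank u < Γ.rank w) :
    Γ.d u w = ∑ᶠ v ∈ {v | Γ.covers u v}, Γ.d v w := by
  have hdisj : Set.PairwiseDisjoint {v | Γ.covers u v} fun v => List.cons u '' Γ.chains v w := by
    intro v _ v' _ hvv'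
    refine Set.disjoint_left.2 ?_
    rintro _ ⟨q, hq, rfl⟩ ⟨q', hq', hqq'⟩
    obtain rfl : q' = q := List.cons_injective hqq'
    exact hvv' (Option.some_injective _ (hq'.2.1.symm.trans hq.2.1)).symm
  rw [d_eq_ncard_chains, chains_eq_biUnion h,
    Set.Finite.ncard_biUnion (Γ.finite_covers u) (fun v _ => (Γ.finite_chains v w).image _) hdisj]
  simp only [Set.ncard_image_of_injective _ List.cons_injective, d_eq_ncard_chains]

theorem d_le_d_of_covers_right (h : Γ.covers v w) : Γ.d u v ≤ Γ.d u w :=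
  Set.ncard_le_ncard_of_injOn (· ++ [w]) (fun _ hq => concat_mem_chains hq h)
    (fun _ _ _ _ => List.append_cancel_right) (Γ.finite_chains u w)

theorem d_le_d_of_covers_left (h : Γ.covers u v) : Γ.d v w ≤ Γ.d u w :=
  Set.ncard_le_ncard_of_injOn (u :: ·) (fun _ hq => cons_mem_chains h hq)
    List.cons_injective.injOn (Γ.finite_chains u w)

theorem d_le_d_bot (v w : Γ.V) : Γ.d v w ≤ Γ.d Γ.bot w := by
  induction hk : Γ.rank v generalizing v with
  | zero => rw [Γ.bot_unique v hk]
  | succ k ih =>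
    obtain ⟨u, huv⟩ := Γ.exists_pred v (by omega)
    exact (d_le_d_of_covers_left huv).trans (ih u (by have := Γ.rank_covers u v huv; omega))

theorem d_self_pos (w : Γ.V) : 0 < Γ.d w w :=
  (Set.ncard_pos (Γ.finite_chains w w)).2 ⟨[w], by simp⟩

theorem d_bot_pos (w : Γ.V) : 0 < Γ.d Γ.bot w :=
  (d_self_pos w).trans_le (d_le_d_bot w w)

theorem rank_path {t : ℕ → Γ.V} (ht : ∀ n, Γ.covers (t n) (t (n + 1))) (n : ℕ) :
    Γ.rank (t n) = Γ.rank (t 0) + n := by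
  induction n with
  | zero => rfl
  | succ n ih => rw [Γ.rank_covers _ _ (ht n), ih, add_assoc]

theorem harmonic_of_eventually_d_path_eq {t : ℕ → Γ.V}
    (ht : ∀ n, Γ.covers (t n) (t (n + 1))) {L : Γ.V → ℕ}
    (hL : ∀ v, ∀ᶠ n in atTop, Γ.d v (t n) = L v) (u : Γ.V) :
    L u = ∑ᶠ v ∈ {v | Γ.covers u v}, L v := by
  have hrank : ∀ᶠ n in atTop, Γ.rank u < Γ.rank (t n) := by
    filter_upwards [eventually_gt_atTop (Γ.rank u)] with n hn
    rw [rank_path ht]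
    omega
  have hcovers : ∀ᶠ n in atTop, ∀ v ∈ {v | Γ.covers u v}, Γ.d v (t n) = L v :=
    (eventually_all_finite (Γ.finite_covers u)).2 fun v _ => hL v
  obtain ⟨n, hu, hn, hv⟩ := ((hL u).and (hrank.and hcovers)).exists
  rw [← hu, d_eq_finsum_covers hn]
  exact finsum_mem_congr rfl hv

end BranchingDiagram

/-- If `t` is an infinite path in a branching diagram with `d(∅,t) < ∞` (the
weakly increasing sequence `n ↦ d(∅, t n)` is bounded, hence eventually constant),
then `φ_t(v) = d(v,t)/d(∅,t)` is a non-negative normalized harmonic function. -/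
theorem stmt_6 (Γ : BranchingDiagram) (t : ℕ → Γ.V)
    (ht : ∀ n, Γ.covers (t n) (t (n + 1)))
    (hfin : ∃ C, ∀ n, Γ.d Γ.bot (t n) ≤ C) :
    ∃ L : Γ.V → ℕ,
      (∀ v, ∀ᶠ n in Filter.atTop, Γ.d v (t n) = L v) ∧
      0 < L Γ.bot ∧
      (L Γ.bot : ℝ) / (L Γ.bot : ℝ) = 1 ∧
      (∀ v, 0 ≤ (L v : ℝ) / (L Γ.bot : ℝ)) ∧
      (∀ u, (L u : ℝ) / (L Γ.bot : ℝ) =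
        ∑ᶠ w ∈ {w | Γ.covers u w}, (L w : ℝ) / (L Γ.bot : ℝ)) := by
  obtain ⟨C, hC⟩ := hfin
  set L : Γ.V → ℕ := fun v => ⨆ n, Γ.d v (t n)
  have hL : ∀ v, ∀ᶠ n in atTop, Γ.d v (t n) = L v := fun v =>
    Nat.eventually_eq_iSup_of_monotone
      (monotone_nat_of_le_succ fun n => BranchingDiagram.d_le_d_of_covers_right (ht n))
      ⟨C, Set.forall_mem_range.2 fun n => (BranchingDiagram.d_le_d_bot v (t n)).trans (hC n)⟩
  have hLbot : 0 < L Γ.bot := by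
    obtain ⟨n, hn⟩ := (hL Γ.bot).exists
    exact hn ▸ BranchingDiagram.d_bot_pos (t n)
  refine ⟨L, hL, hLbot, div_self (by positivity), fun v => by positivity, fun u => ?_⟩
  rw [BranchingDiagram.harmonic_of_eventually_d_path_eq ht hL u,
    Nat.cast_finsum_mem (Γ.finite_covers u)]
  simp only [div_eq_mul_inv, finsum_mem_mul]
end

section
/- In a 1-differential poset Γ, the function φ_P(v) = d(∅, v)/n!, where n = |v|, is a non-negative normalized harmonic function: φ_P(∅) = 1 and φ_P(v) = Σ_{w : v ⋖ w} φ_P(w) for all v. -/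
/-
Writing `D v = d(∅, v)`, the chains through the lower covers give `D w = ∑_{x ⋖ w} D x` for
`w ≠ ∅`. Feeding `D` into `DU = UD + I` turns `∑_{v ⋖ w} D w` into `D v + ∑_{y ⋖ v} ∑_{y ⋖ x} D x`,
so induction on the rank gives `∑_{v ⋖ w} D w = (|v| + 1) D v`; dividing by `(|v| + 1)!` is the
harmonicity of `φ_P`.
-/

open Finset
open scoped Classical

namespace BranchingDiagram

variable (Γ : BranchingDiagram)

noncomputable def level (n : ℕ) : Finset Γ.V := (Γ.finite_level n).toFinset

noncomputable def upperCovers (v : Γ.V) : Finset Γ.V :=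
  {w ∈ Γ.level (Γ.rank v + 1) | Γ.covers v w}

noncomputable def lowerCovers (w : Γ.V) : Finset Γ.V :=
  {x ∈ Γ.level (Γ.rank w - 1) | Γ.covers x w}

variable {Γ}

@[simp]
lemma mem_level {n : ℕ} {v : Γ.V} : v ∈ Γ.level n ↔ Γ.rank v = n := by
  simp [level]

@[simp]
lemma mem_upperCovers {v w : Γ.V} : w ∈ Γ.upperCovers v ↔ Γ.covers v w := by
  simpa [upperCovers] using fun h => Γ.rank_covers v w h

@[simp]
lemma mem_lowerCovers {w x : Γ.V} : x ∈ Γ.lowerCovers w ↔ Γ.covers x w := by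
  simp only [lowerCovers, mem_filter, mem_level, and_iff_right_iff_imp]
  intro h
  rw [Γ.rank_covers x w h, Nat.add_sub_cancel]

lemma lowerCovers_eq_filter {w : Γ.V} {n : ℕ} (hw : Γ.rank w = n + 1) :
    Γ.lowerCovers w = {x ∈ Γ.level n | Γ.covers x w} := by
  rw [lowerCovers, hw, Nat.add_sub_cancel]

lemma upperCovers_eq_filter {v : Γ.V} {n : ℕ} (hv : Γ.rank v + 1 = n) :
    Γ.upperCovers v = {x ∈ Γ.level n | Γ.covers v x} := by
  rw [upperCovers, hv]

variable (Γ) in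
def saturatedChains (u w : Γ.V) : Set (List Γ.V) :=
  {p | p.IsChain Γ.covers ∧ p.head? = some u ∧ p.getLast? = some w}

lemma d_eq_ncard_saturatedChains (u w : Γ.V) : Γ.d u w = (Γ.saturatedChains u w).ncard := rfl

lemma rank_add_length_of_mem_saturatedChains {p : List Γ.V} :
    ∀ {u w : Γ.V}, p ∈ Γ.saturatedChains u w → Γ.rank u + p.length = Γ.rank w + 1 := by
  induction p with
  | nil => rintro u w ⟨-, h, -⟩; cases h
  | cons a q ih =>
    rintro u w ⟨hc, hu, hw⟩
    cases hu
    cases q with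
    | nil => cases hw; rfl
    | cons b q =>
      rw [List.isChain_cons_cons] at hc
      have := ih ⟨hc.2, rfl, by simpa using hw⟩
      have := Γ.rank_covers a b hc.1
      simp only [List.length_cons] at *
      omega

lemma eq_singleton_of_mem_saturatedChains {u w : Γ.V} {p : List Γ.V}
    (hp : p ∈ Γ.saturatedChains u w) (h : Γ.rank w = Γ.rank u) : p = [u] := by
  have hlen := rank_add_length_of_mem_saturatedChains hp
  obtain ⟨a, rfl⟩ := List.length_eq_one_iff.mp (show p.length = 1 by omega)
  simpa using hp.2.1

lemma saturatedChains_self (u : Γ.V) : Γ.saturatedChains u u = {[u]} :=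
  Set.eq_singleton_iff_unique_mem.mpr
    ⟨⟨List.isChain_singleton u, rfl, rfl⟩, fun _ hp => eq_singleton_of_mem_saturatedChains hp rfl⟩

lemma d_self (u : Γ.V) : Γ.d u u = 1 := by
  rw [d_eq_ncard_saturatedChains, saturatedChains_self, Set.ncard_singleton]

lemma saturatedChains_eq_biUnion {u w : Γ.V} (h : Γ.rank w ≠ Γ.rank u) :
    Γ.saturatedChains u w =
      ⋃ x ∈ Γ.lowerCovers w, (· ++ [w]) '' Γ.saturatedChains u x := by
  ext p
  simp only [Set.mem_iUnion, Set.mem_image, mem_lowerCovers, exists_prop]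
  constructor
  · rintro ⟨hc, hu, hw⟩
    obtain rfl | ⟨q, b, rfl⟩ := List.eq_nil_or_concat' p
    · cases hu
    obtain rfl : b = w := by simpa using hw
    have hq : q ≠ [] := by
      rintro rfl
      simp only [List.nil_append, List.head?_cons, Option.some.injEq] at hu
      exact h (congrArg Γ.rank hu)
    rw [List.isChain_append] at hc
    have hlast := List.getLast?_eq_getLast_of_ne_nil hq
    refine ⟨q.getLast hq, hc.2.2 _ hlast _ rfl, q, ⟨hc.1, ?_, hlast⟩, rfl⟩
    rwa [List.head?_append_of_ne_nil q hq] at hu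
  · rintro ⟨x, hx, q, ⟨hc, hu, hlast⟩, rfl⟩
    have hq : q ≠ [] := by rintro rfl; cases hu
    refine ⟨List.isChain_append.mpr ⟨hc, List.isChain_singleton w, ?_⟩, ?_, by simp⟩
    · simp [hlast, hx]
    · rwa [List.head?_append_of_ne_nil q hq]

lemma saturatedChains_finite (u w : Γ.V) : (Γ.saturatedChains u w).Finite := by
  induction hn : Γ.rank w using Nat.strong_induction_on generalizing w with
  | _ n ih =>
    by_cases h : Γ.rank w = Γ.rank u
    · exact (Set.finite_singleton [u]).subset fun _ hp => eq_singleton_of_mem_saturatedChains hp h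
    rw [saturatedChains_eq_biUnion h]
    refine (Γ.lowerCovers w).finite_toSet.biUnion fun x hx => (ih _ ?_ x rfl).image _
    have := Γ.rank_covers x w (mem_lowerCovers.mp hx)
    omega

lemma d_eq_sum_lowerCovers {u w : Γ.V} (h : Γ.rank w ≠ Γ.rank u) :
    Γ.d u w = ∑ x ∈ Γ.lowerCovers w, Γ.d u x := by
  have hinj : Function.Injective (· ++ [w]) := List.append_left_injective [w]
  have hdisj : (Γ.lowerCovers w : Set Γ.V).PairwiseDisjoint
      fun x => (· ++ [w]) '' Γ.saturatedChains u x := by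
    intro x _ y _ hxy
    refine Set.disjoint_left.mpr ?_
    rintro _ ⟨q, ⟨-, -, hx⟩, rfl⟩ ⟨q', ⟨-, -, hy⟩, hqq'⟩
    obtain rfl := hinj hqq'
    exact hxy (Option.some.inj (hx.symm.trans hy))
  rw [d_eq_ncard_saturatedChains, saturatedChains_eq_biUnion h, ← set_biUnion_coe,
    (Γ.lowerCovers w).finite_toSet.ncard_biUnion
      (fun x _ => (saturatedChains_finite u x).image _) hdisj,
    finsum_mem_coe_finset]
  simp_rw [Set.ncard_image_of_injective _ hinj, d_eq_ncard_saturatedChains]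

section DoubleCounting

variable {M : Type*} [AddCommMonoid M] (f : Γ.V → M)

lemma sum_upperCovers_sum_lowerCovers (v : Γ.V) :
    ∑ w ∈ Γ.upperCovers v, ∑ x ∈ Γ.lowerCovers w, f x =
      ∑ x ∈ Γ.level (Γ.rank v), #{w ∈ Γ.upperCovers v | Γ.covers x w} • f x := by
  calc ∑ w ∈ Γ.upperCovers v, ∑ x ∈ Γ.lowerCovers w, f x
      = ∑ w ∈ Γ.upperCovers v, ∑ x ∈ Γ.level (Γ.rank v), if Γ.covers x w then f x else 0 := by
        refine sum_congr rfl fun w hw => ?_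
        rw [lowerCovers_eq_filter (Γ.rank_covers v w (mem_upperCovers.mp hw)), sum_filter]
    _ = _ := by
        rw [sum_comm]
        simp_rw [← sum_filter, sum_const]

lemma sum_lowerCovers_sum_upperCovers (v : Γ.V) :
    ∑ y ∈ Γ.lowerCovers v, ∑ x ∈ Γ.upperCovers y, f x =
      ∑ x ∈ Γ.level (Γ.rank v), #{y ∈ Γ.lowerCovers v | Γ.covers y x} • f x := by
  calc ∑ y ∈ Γ.lowerCovers v, ∑ x ∈ Γ.upperCovers y, f x
      = ∑ y ∈ Γ.lowerCovers v, ∑ x ∈ Γ.level (Γ.rank v), if Γ.covers y x then f x else 0 := by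
        refine sum_congr rfl fun y hy => ?_
        rw [upperCovers_eq_filter (Γ.rank_covers y v (mem_lowerCovers.mp hy)).symm,
          sum_filter]
    _ = _ := by
        rw [sum_comm]
        simp_rw [← sum_filter, sum_const]

end DoubleCounting

lemma card_filter_upperCovers (v x : Γ.V) :
    #{w ∈ Γ.upperCovers v | Γ.covers x w} = {w | Γ.covers v w ∧ Γ.covers x w}.ncard := by
  rw [← Set.ncard_coe_finset]
  congr 1
  ext
  simp

lemma card_filter_lowerCovers (v x : Γ.V) :
    #{y ∈ Γ.lowerCovers v | Γ.covers y x} = {y | Γ.covers y v ∧ Γ.covers y x}.ncard := by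
  rw [← Set.ncard_coe_finset]
  congr 1
  ext
  simp

namespace IsDifferential

lemma card_filter_upperCovers_eq (hΓ : Γ.IsDifferential) {v x : Γ.V} (hx : Γ.rank x = Γ.rank v) :
    #{w ∈ Γ.upperCovers v | Γ.covers x w} =
      #{y ∈ Γ.lowerCovers v | Γ.covers y x} + if x = v then 1 else 0 := by
  rw [card_filter_upperCovers, card_filter_lowerCovers]
  split_ifs with hxv
  · subst hxv
    simpa using hΓ.2 x
  · simpa using (hΓ.1 v x (Ne.symm hxv) hx.symm).symm

/-- `DU = UD + I`, applied to `f` and evaluated at `v`. -/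
lemma sum_up_down (hΓ : Γ.IsDifferential) {M : Type*} [AddCommMonoid M] (f : Γ.V → M) (v : Γ.V) :
    ∑ w ∈ Γ.upperCovers v, ∑ x ∈ Γ.lowerCovers w, f x =
      f v + ∑ y ∈ Γ.lowerCovers v, ∑ x ∈ Γ.upperCovers y, f x := by
  rw [sum_upperCovers_sum_lowerCovers, sum_lowerCovers_sum_upperCovers]
  calc ∑ x ∈ Γ.level (Γ.rank v), #{w ∈ Γ.upperCovers v | Γ.covers x w} • f x
      = ∑ x ∈ Γ.level (Γ.rank v),
          (#{y ∈ Γ.lowerCovers v | Γ.covers y x} • f x + if x = v then f x else 0) := by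
        refine sum_congr rfl fun x hx => ?_
        rw [hΓ.card_filter_upperCovers_eq (mem_level.mp hx), add_smul, ite_smul, one_smul,
          zero_smul]
    _ = _ := by
        rw [sum_add_distrib, sum_ite_eq', if_pos (mem_level.mpr rfl), add_comm]

end IsDifferential

lemma sum_upperCovers_d_bot (hΓ : Γ.IsDifferential) (v : Γ.V) :
    ∑ w ∈ Γ.upperCovers v, Γ.d Γ.bot w = (Γ.rank v + 1) * Γ.d Γ.bot v := by
  have ih : ∀ y ∈ Γ.lowerCovers v, ∑ x ∈ Γ.upperCovers y, Γ.d Γ.bot x = Γ.rank v * Γ.d Γ.bot y :=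
    fun y hy => by
      rw [sum_upperCovers_d_bot hΓ y, Γ.rank_covers y v (mem_lowerCovers.mp hy)]
  have hrec : Γ.rank v * ∑ y ∈ Γ.lowerCovers v, Γ.d Γ.bot y = Γ.rank v * Γ.d Γ.bot v := by
    rcases Nat.eq_zero_or_pos (Γ.rank v) with h | h
    · rw [h, zero_mul, zero_mul]
    · rw [← d_eq_sum_lowerCovers (by rw [Γ.rank_bot]; omega)]
  calc ∑ w ∈ Γ.upperCovers v, Γ.d Γ.bot w
      = ∑ w ∈ Γ.upperCovers v, ∑ x ∈ Γ.lowerCovers w, Γ.d Γ.bot x := by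
        refine sum_congr rfl fun w hw => d_eq_sum_lowerCovers ?_
        rw [Γ.rank_covers v w (mem_upperCovers.mp hw), Γ.rank_bot]
        exact Nat.succ_ne_zero _
    _ = Γ.d Γ.bot v + ∑ y ∈ Γ.lowerCovers v, ∑ x ∈ Γ.upperCovers y, Γ.d Γ.bot x :=
        hΓ.sum_up_down _ v
    _ = (Γ.rank v + 1) * Γ.d Γ.bot v := by
        rw [sum_congr rfl ih, ← mul_sum, hrec]
        ring
termination_by Γ.rank v
decreasing_by
  have := Γ.rank_covers y v (mem_lowerCovers.mp hy)
  omega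

end BranchingDiagram

/-- In a `1`-differential poset, the Plancherel function `φ_P(v) = d(∅,v)/n!`
(`n = |v|`) is a non-negative normalized harmonic function. -/
theorem stmt_11 (Γ : BranchingDiagram) (hΓ : Γ.IsDifferential) :
    (Γ.d Γ.bot Γ.bot : ℝ) / (Γ.rank Γ.bot).factorial = 1 ∧
    (∀ v, 0 ≤ (Γ.d Γ.bot v : ℝ) / (Γ.rank v).factorial) ∧
    (∀ v, (Γ.d Γ.bot v : ℝ) / (Γ.rank v).factorial =
      ∑ᶠ w ∈ {w | Γ.covers v w}, (Γ.d Γ.bot w : ℝ) / (Γ.rank w).factorial) := by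
  refine ⟨by simp [Γ.d_self, Γ.rank_bot], fun v => by positivity, fun v => ?_⟩
  have hset : {w | Γ.covers v w} = (Γ.upperCovers v : Set Γ.V) := by
    ext; simp
  have hrank : ∀ w ∈ Γ.upperCovers v, Γ.rank w = Γ.rank v + 1 :=
    fun w hw => Γ.rank_covers v w (BranchingDiagram.mem_upperCovers.mp hw)
  rw [hset, finsum_mem_coe_finset, sum_congr rfl fun w hw => by rw [hrank w hw], ← sum_div,
    ← Nat.cast_sum, Γ.sum_upperCovers_d_bot hΓ v, Nat.factorial_succ]
  push_cast
  rw [mul_div_mul_left _ _ (by positivity)]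
end

section
/- Let v be a finite Fibonacci word with 2's at positions d_1 < … < d_n, and for k ≥ 2 set π_k(v) = ∏_{j : d_j ≥ k−1} (1 − k/d_j) and π(v) = ∏_{j : d_j ≥ 2} (1 − 1/d_j). Then |π_k(v)| ≤ (k · π(v))^k. -/
/-- The list of positions of the `2`'s in a Fibonacci word (leftmost `2` first):
if `w = u ++ 2 :: v` then the position of the indicated `2` is `|v| + 1`, where
`|v|` is the sum of the digits of `v`. -/
def pos2 : List ℕ → List ℕ
  | [] => []
  | 2 :: t => (t.sum + 1) :: pos2 t
  | _ :: t => pos2 t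

/-- `π(v) = ∏_{j : d_j ≥ 2} (1 − 1/d_j)`, the product over positions of `2`'s. -/
noncomputable def piWord (v : List ℕ) : ℝ :=
  (((pos2 v).filter (fun d => decide (2 ≤ d))).map (fun d => 1 - 1 / (d : ℝ))).prod

/-- `π_k(v) = ∏_{j : d_j ≥ k−1} (1 − k/d_j)`, the product over positions of `2`'s. -/
noncomputable def piK (k : ℕ) (v : List ℕ) : ℝ :=
  (((pos2 v).filter (fun d => decide (k - 1 ≤ d))).map (fun d => 1 - (k : ℝ) / (d : ℝ))).prod

/-!
The positions of the `2`'s strictly decrease, so `π` and `π_k` are products over a set of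
distinct naturals. A factor with `d ≥ k` satisfies `0 ≤ 1 - k/d ≤ (1 - 1/d)^k` (Bernoulli), and
the factor with `d = k - 1` has absolute value `1/(k - 1) ≤ 1`. The remaining factors of `π^k`,
those with `2 ≤ d < k`, have product at least `(∏_{2 ≤ d < k} (1 - 1/d))^k = (k - 1)^{-k}`
by telescoping, which `k^k` compensates.
-/

open Finset

lemma pos2_add_one_le_sum : ∀ v : List ℕ, ∀ d ∈ pos2 v, d + 1 ≤ v.sum
  | [] => by simp [pos2]
  | 2 :: t => by
    simp only [pos2, List.mem_cons, List.sum_cons, forall_eq_or_imp]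
    exact ⟨by omega, fun d hd => by have := pos2_add_one_le_sum t d hd; omega⟩
  | 0 :: t | 1 :: t | (_ + 3) :: t => by
    simp only [pos2, List.sum_cons]
    exact fun d hd => by have := pos2_add_one_le_sum t d hd; omega

lemma pos2_pairwise_gt : ∀ v : List ℕ, (pos2 v).Pairwise (· > ·)
  | [] => by simp [pos2]
  | 2 :: t => by
    simp only [pos2, List.pairwise_cons]
    exact ⟨fun d hd => by have := pos2_add_one_le_sum t d hd; omega, pos2_pairwise_gt t⟩
  | 0 :: t | 1 :: t | (_ + 3) :: t => pos2_pairwise_gt t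

lemma pos2_nodup (v : List ℕ) : (pos2 v).Nodup :=
  (pos2_pairwise_gt v).imp ne_of_gt

/-- `piK` and `piWord` elaborate with the filtered list cast to `List ℝ` through the list monad. -/
lemma prod_map_filter_natCast_eq_prod_toFinset {l : List ℕ} (hl : l.Nodup) (p : ℕ → Prop)
    [DecidablePred p] (g : ℝ → ℝ) :
    ((l.filter (fun d => decide (p d)) >>= fun d => pure (d : ℝ)).map g).prod =
      ∏ d ∈ l.toFinset with p d, g d := by
  simp only [List.bind_eq_flatMap, List.pure_def]
  rw [← List.map_eq_flatMap, List.map_map, ← List.prod_toFinset _ (hl.filter _),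
    List.toFinset_filter]
  simp

lemma piK_eq_prod (k : ℕ) (v : List ℕ) :
    piK k v = ∏ d ∈ (pos2 v).toFinset with k - 1 ≤ d, (1 - k / (d : ℝ)) :=
  prod_map_filter_natCast_eq_prod_toFinset (pos2_nodup v) _ _

lemma piWord_eq_prod (v : List ℕ) :
    piWord v = ∏ d ∈ (pos2 v).toFinset with 2 ≤ d, (1 - 1 / (d : ℝ)) :=
  prod_map_filter_natCast_eq_prod_toFinset (pos2_nodup v) _ _

lemma one_div_natCast_le_one (n : ℕ) : 1 / (n : ℝ) ≤ 1 := by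
  rw [one_div]
  exact Nat.cast_inv_le_one n

lemma prod_Ico_two_one_sub_one_div (n : ℕ) :
    ∏ d ∈ Ico 2 (n + 2), (1 - 1 / (d : ℝ)) = 1 / (n + 1) := by
  induction n with
  | zero => norm_num
  | succ n ih =>
    rw [prod_Ico_succ_top (by omega), ih]
    push_cast
    field_simp
    ring

lemma one_div_le_prod_one_sub_one_div {T : Finset ℕ} {k : ℕ} (hT : ∀ d ∈ T, 2 ≤ d ∧ d < k) :
    1 / (k : ℝ) ≤ ∏ d ∈ T, (1 - 1 / (d : ℝ)) := by
  rcases T.eq_empty_or_nonempty with rfl | ⟨d, hd⟩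
  · simpa using one_div_natCast_le_one k
  obtain ⟨n, rfl⟩ : ∃ n, k = n + 2 := ⟨k - 2, by have := hT d hd; omega⟩
  calc 1 / ((n + 2 : ℕ) : ℝ) ≤ 1 / (n + 1) := by
        push_cast
        gcongr
        linarith
    _ = ∏ d ∈ Ico 2 (n + 2), (1 - 1 / (d : ℝ)) := (prod_Ico_two_one_sub_one_div n).symm
    _ ≤ ∏ d ∈ T, (1 - 1 / (d : ℝ)) :=
        prod_le_prod_of_subset_of_le_one (fun d hd => mem_Ico.mpr (hT d hd))
          (fun d _ => sub_nonneg.mpr (one_div_natCast_le_one d))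
          (fun d _ _ => sub_le_self _ (by positivity))

lemma abs_one_sub_div_le_one_sub_one_div_pow {k d : ℕ} (hkd : k ≤ d) :
    |1 - k / (d : ℝ)| ≤ (1 - 1 / (d : ℝ)) ^ k := by
  have hdiv : (k : ℝ) / d ≤ 1 := div_le_one_of_le₀ (by exact_mod_cast hkd) (Nat.cast_nonneg d)
  have hinv := one_div_natCast_le_one d
  rw [abs_of_nonneg (by linarith)]
  calc 1 - k / (d : ℝ) = 1 + k * -(1 / (d : ℝ)) := by ring
    _ ≤ (1 + -(1 / (d : ℝ))) ^ k := one_add_mul_le_pow (by linarith) k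
    _ = (1 - 1 / (d : ℝ)) ^ k := by ring

lemma abs_one_sub_succ_div_le_one (d : ℕ) : |1 - (d + 1 : ℕ) / (d : ℝ)| ≤ 1 := by
  rcases Nat.eq_zero_or_pos d with rfl | hd
  · simp
  have : (1 : ℝ) - (d + 1 : ℕ) / d = -(1 / d) := by push_cast; field_simp; ring
  rw [this, abs_neg, abs_of_nonneg (by positivity)]
  exact one_div_natCast_le_one d

lemma abs_prod_one_sub_div_le_pow (S : Finset ℕ) {k : ℕ} (hk : 2 ≤ k) :
    |∏ d ∈ S with k - 1 ≤ d, (1 - k / (d : ℝ))| ≤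
      (k * ∏ d ∈ S with 2 ≤ d, (1 - 1 / (d : ℝ))) ^ k := by
  set A := S.filter (k ≤ ·)
  set B := S.filter (fun d => 2 ≤ d ∧ d < k)
  have hfactor : ∀ d ∈ S.filter (k - 1 ≤ ·),
      |1 - k / (d : ℝ)| ≤ if k ≤ d then (1 - 1 / (d : ℝ)) ^ k else 1 := by
    intro d hd
    split_ifs with hkd
    · exact abs_one_sub_div_le_one_sub_one_div_pow hkd
    · obtain rfl : k = d + 1 := by have := (mem_filter.mp hd).2; omega
      exact abs_one_sub_succ_div_le_one d
  have hleft : |∏ d ∈ S with k - 1 ≤ d, (1 - k / (d : ℝ))| ≤ ∏ d ∈ A, (1 - 1 / (d : ℝ)) ^ k :=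
    calc |∏ d ∈ S with k - 1 ≤ d, (1 - k / (d : ℝ))|
        ≤ ∏ d ∈ S with k - 1 ≤ d, if k ≤ d then (1 - 1 / (d : ℝ)) ^ k else 1 := by
          rw [abs_prod]
          exact prod_le_prod (fun _ _ => abs_nonneg _) hfactor
      _ = ∏ d ∈ A, (1 - 1 / (d : ℝ)) ^ k := by
          rw [← prod_filter, filter_filter]
          exact prod_congr (filter_congr fun d _ => by omega) fun _ _ => rfl
  have hsplit : ∏ d ∈ S with 2 ≤ d, (1 - 1 / (d : ℝ)) =
      (∏ d ∈ B, (1 - 1 / (d : ℝ))) * ∏ d ∈ A, (1 - 1 / (d : ℝ)) := by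
    rw [← prod_filter_mul_prod_filter_not (S.filter (2 ≤ ·)) (· < k), filter_filter,
      filter_filter]
    congr 2
    exact filter_congr fun d _ => by omega
  have hB : 1 ≤ (k : ℝ) * ∏ d ∈ B, (1 - 1 / (d : ℝ)) := by
    have hk0 : (0 : ℝ) < k := by positivity
    have := one_div_le_prod_one_sub_one_div (T := B) fun d hd => (mem_filter.mp hd).2
    rwa [div_le_iff₀ hk0, mul_comm] at this
  have hA : 0 ≤ ∏ d ∈ A, (1 - 1 / (d : ℝ)) ^ k :=
    prod_nonneg fun d _ => pow_nonneg (sub_nonneg.mpr (one_div_natCast_le_one d)) k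
  calc |∏ d ∈ S with k - 1 ≤ d, (1 - k / (d : ℝ))|
      ≤ ∏ d ∈ A, (1 - 1 / (d : ℝ)) ^ k := hleft
    _ ≤ ((k : ℝ) * ∏ d ∈ B, (1 - 1 / (d : ℝ))) ^ k * ∏ d ∈ A, (1 - 1 / (d : ℝ)) ^ k :=
        le_mul_of_one_le_left hA (one_le_pow₀ hB)
    _ = (k * ∏ d ∈ S with 2 ≤ d, (1 - 1 / (d : ℝ))) ^ k := by
        rw [hsplit, prod_pow, ← mul_pow, mul_assoc]

theorem stmt_18_general (v : List ℕ) (k : ℕ) (hk : 2 ≤ k) :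
    |piK k v| ≤ ((k : ℝ) * piWord v) ^ k := by
  rw [piK_eq_prod, piWord_eq_prod]
  exact abs_prod_one_sub_div_le_pow _ hk

/-- For every Fibonacci word `v` and every `k ≥ 2`, `|π_k(v)| ≤ (k·π(v))^k`. -/
theorem stmt_18 (v : List ℕ) (hv : IsFibWord v) (k : ℕ) (hk : 2 ≤ k) :
    |piK k v| ≤ ((k : ℝ) * piWord v) ^ k :=
  stmt_18_general v k hk
end

section
/- Let v be a finite Fibonacci word with 2's at positions d_1 < d_2 < … (so any two positions differ by at least 2). If d_1 ≠ 2 then |π_2(v)| ≥ π(v)^4, and if d_1 = 2 then |π_3(v)| ≥ π(v)^9, where π_k(v) = ∏_{j : d_j ≥ k−1}(1 − k/d_j) and π(v) = ∏_{j : d_j ≥ 2}(1 − 1/d_j). -/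
/-!
Both sides are products over the positions `d` of the `2`'s, so they can be compared factor by
factor. For `k < d` the factor of `π(v) ^ k²` is `(1 - 1/d) ^ k² ≤ 1 - k/d`: the function
`x ↦ (1 - x) ^ k²` is convex, so it suffices to check this at `x = 1/(k+1)`, where it says
`k + 1 ≤ (1 + 1/k) ^ k²`, which follows from Bernoulli's inequality `(1 + 1/k) ^ k ≥ 2`.
The only other factors are `d = 1` for `k = 2`, where `1 ≤ |1 - 2|`, and `d = 2` for `k = 3`,
where `(1/2) ^ 9 ≤ |1 - 3/2|`; as positions differ by at least `2`, all other positions are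
then at least `4`.
-/

theorem List.pow_prod_map_le_abs_prod_map {α R : Type*} [CommRing R] [LinearOrder R]
    [IsStrictOrderedRing R] {l : List α} {f g : α → R} (n : ℕ) (hf : ∀ a ∈ l, 0 ≤ f a)
    (h : ∀ a ∈ l, f a ^ n ≤ |g a|) : (l.map f).prod ^ n ≤ |(l.map g).prod| := by
  induction l with
  | nil => simp
  | cons a l ih =>
    simp only [List.forall_mem_cons] at hf h
    rw [List.map_cons, List.map_cons, List.prod_cons, List.prod_cons, mul_pow, abs_mul]
    exact mul_le_mul h.1 (ih hf.2 h.2)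
      (pow_nonneg (List.prod_nonneg (List.forall_mem_map.2 hf.2)) n) (abs_nonneg _)

theorem List.prod_map_filter_eq_prod_map_ite {α M : Type*} [CommMonoid M] (p : α → Prop)
    [DecidablePred p] (f : α → M) (l : List α) :
    ((l.filter p).map f).prod = (l.map fun a ↦ if p a then f a else 1).prod := by
  simp [List.prod_map_ite]

theorem add_one_le_one_add_inv_pow_sq {k : ℕ} (hk : k ≠ 0) :
    (k + 1 : ℝ) ≤ (1 + 1 / k) ^ (k ^ 2) := by
  have two_le : (2 : ℝ) ≤ (1 + 1 / k) ^ k := by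
    have hinv : (0 : ℝ) ≤ 1 / k := by positivity
    have := one_add_mul_le_pow (show (-2 : ℝ) ≤ 1 / k by linarith) k
    rwa [mul_one_div_cancel (Nat.cast_ne_zero.2 hk), one_add_one_eq_two] at this
  calc (k + 1 : ℝ) = 1 + k * 1 := by ring
    _ ≤ (1 + 1) ^ k := one_add_mul_le_pow (by norm_num) k
    _ ≤ ((1 + 1 / k) ^ k) ^ k := by rw [one_add_one_eq_two]; gcongr
    _ = (1 + 1 / k) ^ (k ^ 2) := by rw [← pow_mul, sq]

theorem one_sub_pow_sq_le {k : ℕ} {x : ℝ} (hx₀ : 0 ≤ x) (hx : x ≤ 1 / (k + 1)) :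
    (1 - x) ^ (k ^ 2) ≤ 1 - k * x := by
  set a : ℝ := 1 / (k + 1) with ha
  have ha₀ : 0 < a := by positivity
  have ha₁ : a ≤ 1 := by rw [ha, div_le_one (by positivity)]; simp
  have endpoint : (1 - a) ^ (k ^ 2) ≤ 1 - k * a := by
    rcases eq_or_ne k 0 with rfl | hk
    · simp
    have hk' : (0 : ℝ) < k := by positivity
    have h1a : 1 - a = (1 + 1 / (k : ℝ))⁻¹ := by rw [ha]; field_simp; ring
    have h1ka : 1 - k * a = 1 / (k + 1) := by rw [ha]; field_simp; ring
    rw [h1a, h1ka, inv_pow, one_div (_ + 1 : ℝ)]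
    exact inv_anti₀ (by positivity) (add_one_le_one_add_inv_pow_sq hk)
  set t := x / a
  have ht₀ : 0 ≤ t := by positivity
  have ht₁ : t ≤ 1 := (div_le_one ha₀).2 hx
  have hxt : x = t * a := (div_mul_cancel₀ x ha₀.ne').symm
  have hconv := (convexOn_pow (𝕜 := ℝ) (k ^ 2)).2 (Set.mem_Ici.2 zero_le_one)
    (Set.mem_Ici.2 (sub_nonneg.2 ha₁))
    (sub_nonneg.2 ht₁) ht₀ (sub_add_cancel 1 t)
  simp only [smul_eq_mul, one_pow, mul_one] at hconv
  calc (1 - x) ^ (k ^ 2) = (1 - t + t * (1 - a)) ^ (k ^ 2) := by rw [hxt]; ring_nf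
    _ ≤ 1 - t + t * (1 - a) ^ (k ^ 2) := hconv
    _ ≤ 1 - t + t * (1 - k * a) := by gcongr
    _ = 1 - k * x := by rw [hxt]; ring

theorem one_le_of_mem_pos2 {v : List ℕ} {d : ℕ} (hd : d ∈ pos2 v) : 1 ≤ d := by
  induction v with
  | nil => simp [pos2] at hd
  | cons a t ih =>
    by_cases ha : a = 2
    · subst ha
      rw [pos2.eq_2, List.mem_cons] at hd
      rcases hd with rfl | hd
      exacts [Nat.le_add_left 1 _, ih hd]
    · exact ih (pos2.eq_3 a t ha ▸ hd)

theorem add_one_le_sum_of_mem_pos2 {v : List ℕ} {d : ℕ} (hd : d ∈ pos2 v) : d + 1 ≤ v.sum := by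
  induction v with
  | nil => simp [pos2] at hd
  | cons a t ih =>
    rw [List.sum_cons]
    by_cases ha : a = 2
    · subst ha
      rw [pos2.eq_2, List.mem_cons] at hd
      rcases hd with rfl | hd
      · omega
      · have := ih hd; omega
    · have := ih (pos2.eq_3 a t ha ▸ hd); omega

theorem pairwise_pos2 (v : List ℕ) : (pos2 v).Pairwise fun d e ↦ e + 2 ≤ d := by
  induction v with
  | nil => simp [pos2]
  | cons a t ih =>
    by_cases ha : a = 2
    · subst ha
      rw [pos2.eq_2]
      exact ih.cons fun e he ↦ by have := add_one_le_sum_of_mem_pos2 he; omega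
    · rwa [pos2.eq_3 a t ha]

theorem add_two_le_or_add_two_le_of_mem_pos2 {v : List ℕ} {d e : ℕ} (hd : d ∈ pos2 v)
    (he : e ∈ pos2 v) (hne : d ≠ e) : d + 2 ≤ e ∨ e + 2 ≤ d :=
  have : Std.Symm fun d e : ℕ ↦ d + 2 ≤ e ∨ e + 2 ≤ d := ⟨fun _ _ h ↦ h.symm⟩
  List.Pairwise.forall (R := fun d e : ℕ ↦ d + 2 ≤ e ∨ e + 2 ≤ d)
    ((pairwise_pos2 v).imp Or.inr) hd he hne

noncomputable def piWordFactor (d : ℕ) : ℝ := if 2 ≤ d then 1 - 1 / (d : ℝ) else 1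

noncomputable def piKFactor (k d : ℕ) : ℝ := if k - 1 ≤ d then 1 - (k : ℝ) / (d : ℝ) else 1

-- `piWord` and `piK` cast the filtered positions to `List ℝ` through the list monad.
theorem piWord_eq_prod_map (v : List ℕ) : piWord v = ((pos2 v).map piWordFactor).prod := by
  simp only [piWord, List.pure_def, List.bind_eq_flatMap, ← List.map_eq_flatMap, List.map_map]
  exact List.prod_map_filter_eq_prod_map_ite (2 ≤ ·) _ _

theorem piK_eq_prod_map (k : ℕ) (v : List ℕ) : piK k v = ((pos2 v).map (piKFactor k)).prod := by
  simp only [piK, List.pure_def, List.bind_eq_flatMap, ← List.map_eq_flatMap, List.map_map]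
  exact List.prod_map_filter_eq_prod_map_ite (k - 1 ≤ ·) _ _

theorem piWordFactor_nonneg (d : ℕ) : 0 ≤ piWordFactor d := by
  unfold piWordFactor
  split_ifs with hd
  · rw [sub_nonneg, div_le_one (by positivity)]
    exact_mod_cast one_le_two.trans hd
  · exact zero_le_one

theorem piWordFactor_pow_sq_le_piKFactor {k d : ℕ} (hk : 1 ≤ k) (hkd : k < d) :
    piWordFactor d ^ (k ^ 2) ≤ piKFactor k d := by
  have hd : (k + 1 : ℝ) ≤ d := by exact_mod_cast hkd
  rw [piWordFactor, piKFactor, if_pos (by omega), if_pos (by omega), div_eq_mul_one_div (k : ℝ)]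
  exact one_sub_pow_sq_le (by positivity) (one_div_le_one_div_of_le (by positivity) hd)

theorem stmt_19_general (v : List ℕ) :
    (2 ∉ pos2 v → piWord v ^ 4 ≤ |piK 2 v|) ∧
    (2 ∈ pos2 v → piWord v ^ 9 ≤ |piK 3 v|) := by
  rw [piWord_eq_prod_map, piK_eq_prod_map, piK_eq_prod_map]
  refine ⟨fun h2 ↦ List.pow_prod_map_le_abs_prod_map _ (fun d _ ↦ piWordFactor_nonneg d)
    fun d hd ↦ ?_, fun h2 ↦ List.pow_prod_map_le_abs_prod_map _
    (fun d _ ↦ piWordFactor_nonneg d) fun d hd ↦ ?_⟩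
  · obtain rfl | hd3 : d = 1 ∨ 2 < d := by
      have := one_le_of_mem_pos2 hd
      have : d ≠ 2 := fun h ↦ h2 (h ▸ hd)
      omega
    · norm_num [piWordFactor, piKFactor]
    · exact (piWordFactor_pow_sq_le_piKFactor one_le_two hd3).trans (le_abs_self _)
  · rcases eq_or_ne d 2 with rfl | hne
    · norm_num [piWordFactor, piKFactor]
    · have hd4 : 3 < d := by
        have := one_le_of_mem_pos2 hd
        have := add_two_le_or_add_two_le_of_mem_pos2 hd h2 hne
        omega
      exact (piWordFactor_pow_sq_le_piKFactor (by norm_num) hd4).trans (le_abs_self _)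

/-- If the smallest position `d_1` of a `2` in the Fibonacci word `v` is not `2`
(in particular if `v` has no `2`'s), then `|π_2(v)| ≥ π(v)^4`; and if `d_1 = 2`,
then `|π_3(v)| ≥ π(v)^9`. -/
theorem stmt_19 (v : List ℕ) (hv : IsFibWord v) :
    (2 ∉ pos2 v → piWord v ^ 4 ≤ |piK 2 v|) ∧
    (2 ∈ pos2 v → piWord v ^ 9 ≤ |piK 3 v|) :=
  stmt_19_general v
end
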